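/- Let F_{m,n} be the power series coefficients of F(y,z) = (y/2)(−1 − yz + √(1 − 4z + 2yz + y²z²)) at (0,0). Then there exist constants C, R > 0 such that |F_{m,n}| ≤ C·R^n for all m, n ≥ 0, and consequently the double series F̂(y,z) = Σ_{m,n≥0} F_{m,n} y^m z^n / n! converges for all (y,z) ∈ ℂ² and defines an entire function on ℂ². -/

import Mathlib

open MeasureTheory ProbabilityTheory Complex Filter Topology Metric

/-- The radicand `1 - 4z + 2yz + y²z²`, as a formal power series in the two
variables `y = X 0` and `z = X 1`. -/
noncomputable def radicand : MvPowerSeries (Fin 2) ℂ :=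
  1 - 4 * MvPowerSeries.X 1 + 2 * MvPowerSeries.X 0 * MvPowerSeries.X 1
    + MvPowerSeries.X 0 ^ 2 * MvPowerSeries.X 1 ^ 2

/-- Given `S` (the branch of `√(1 - 4z + 2yz + y²z²)` with constant term `1`, as a
formal power series), `Fcoeff S m n` is the coefficient `F_{m,n} = [yᵐzⁿ] F(y,z)` of the
power series expansion of `F(y,z) = (y/2)(-1 - yz + √(1 - 4z + 2yz + y²z²))` at `(0,0)`. -/
noncomputable def Fcoeff (S : MvPowerSeries (Fin 2) ℂ) (m n : ℕ) : ℂ :=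
  MvPowerSeries.coeff (σ := Fin 2) (R := ℂ) (Finsupp.single 0 m + Finsupp.single 1 n)
    (MvPowerSeries.C (σ := Fin 2) (R := ℂ) (1/2) * MvPowerSeries.X 0 *
      (-1 - MvPowerSeries.X 0 * MvPowerSeries.X 1 + S))

namespace Stmt16Aux
open MvPowerSeries Finsupp Finset

noncomputable def pt (m n : ℕ) : Fin 2 →₀ ℕ := Finsupp.single 0 m + Finsupp.single 1 n


lemma pt_apply0 (m n : ℕ) : pt m n 0 = m := by
  simp [pt, Finsupp.single_apply]

lemma pt_apply1 (m n : ℕ) : pt m n 1 = n := by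
  simp [pt, Finsupp.single_apply]

lemma eq_pt (g : Fin 2 →₀ ℕ) : g = pt (g 0) (g 1) := by
  ext i
  fin_cases i
  · simp [pt_apply0]
  · simp [pt_apply1]

lemma pt_inj {m n a b : ℕ} (h : pt m n = pt a b) : m = a ∧ n = b := by
  constructor
  · have := congrArg (fun g => g 0) h; simpa [pt_apply0] using this
  · have := congrArg (fun g => g 1) h; simpa [pt_apply1] using this

lemma pt_inj_iff {m n a b : ℕ} : pt m n = pt a b ↔ m = a ∧ n = b :=
  ⟨pt_inj, by rintro ⟨rfl, rfl⟩; rfl⟩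

lemma pt_add (a b c d : ℕ) : pt a b + pt c d = pt (a + c) (b + d) := by
  ext i
  fin_cases i <;> simp [pt_apply0, pt_apply1]

/-- Reindexing the multiplication formula to a double sum over ranges. -/
lemma coeff_mul_pt (φ ψ : MvPowerSeries (Fin 2) ℂ) (m n : ℕ) :
    coeff (R := ℂ) (pt m n) (φ * ψ) =
      ∑ a ∈ range (m + 1), ∑ b ∈ range (n + 1),
        coeff (R := ℂ) (pt a b) φ * coeff (R := ℂ) (pt (m - a) (n - b)) ψ := by
  classical
  rw [MvPowerSeries.coeff_mul, ← Finset.sum_product']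
  refine Finset.sum_nbij' (fun p => (p.1 0, p.1 1)) (fun q => (pt q.1 q.2, pt (m - q.1) (n - q.2)))
      ?_ ?_ ?_ ?_ ?_
  · intro p hp
    rw [Finset.HasAntidiagonal.mem_antidiagonal] at hp
    have h0 : p.1 0 + p.2 0 = m := by
      have := congrArg (fun g => g 0) hp; simpa [pt_apply0] using this
    have h1 : p.1 1 + p.2 1 = n := by
      have := congrArg (fun g => g 1) hp; simpa [pt_apply1] using this
    simp only [Finset.mem_product, Finset.mem_range]
    omega
  · intro q hq
    simp only [Finset.mem_product, Finset.mem_range] at hq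
    rw [Finset.HasAntidiagonal.mem_antidiagonal, pt_add]
    rw [pt_inj_iff]
    omega
  · intro p hp
    rw [Finset.HasAntidiagonal.mem_antidiagonal] at hp
    have h0 : p.1 0 + p.2 0 = m := by
      have := congrArg (fun g => g 0) hp; simpa [pt_apply0] using this
    have h1 : p.1 1 + p.2 1 = n := by
      have := congrArg (fun g => g 1) hp; simpa [pt_apply1] using this
    have e1 : p.1 = pt (p.1 0) (p.1 1) := eq_pt p.1
    have e2 : p.2 = pt (m - p.1 0) (n - p.1 1) := by
      conv_lhs => rw [eq_pt p.2]
      rw [pt_inj_iff]; omega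
    exact Prod.ext e1.symm e2.symm
  · intro q hq
    simp only [Finset.mem_product, Finset.mem_range] at hq
    simp [pt_apply0, pt_apply1]
  · intro p hp
    rw [Finset.HasAntidiagonal.mem_antidiagonal] at hp
    have h0 : p.1 0 + p.2 0 = m := by
      have := congrArg (fun g => g 0) hp; simpa [pt_apply0] using this
    have h1 : p.1 1 + p.2 1 = n := by
      have := congrArg (fun g => g 1) hp; simpa [pt_apply1] using this
    have e1 : pt (p.1 0) (p.1 1) = p.1 := (eq_pt p.1).symm
    have e2 : pt (m - p.1 0) (n - p.1 1) = p.2 := by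
      conv_rhs => rw [eq_pt p.2]
      rw [pt_inj_iff]; omega
    simp only [e1, e2]

lemma pt_zero : pt 0 0 = 0 := by simp [pt]

lemma X0_mul_X1 : (MvPowerSeries.X 0 : MvPowerSeries (Fin 2) ℂ) * MvPowerSeries.X 1
    = MvPowerSeries.monomial (R := ℂ) (pt 1 1) 1 := by
  rw [X_def, X_def, monomial_mul_monomial, one_mul]
  rfl

lemma X0sq_mul_X1sq : (MvPowerSeries.X 0 : MvPowerSeries (Fin 2) ℂ) ^ 2 * MvPowerSeries.X 1 ^ 2
    = MvPowerSeries.monomial (R := ℂ) (pt 2 2) 1 := by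
  rw [X_pow_eq, X_pow_eq, monomial_mul_monomial, one_mul]
  rfl

lemma four_X1 : (4 : MvPowerSeries (Fin 2) ℂ) * MvPowerSeries.X 1
    = MvPowerSeries.monomial (R := ℂ) (pt 0 1) 4 := by
  have h4 : (4 : MvPowerSeries (Fin 2) ℂ) = MvPowerSeries.C (σ := Fin 2) (R := ℂ) 4 :=
    (map_ofNat (MvPowerSeries.C (σ := Fin 2) (R := ℂ)) 4).symm
  rw [h4, show MvPowerSeries.C (σ := Fin 2) (R := ℂ) (4:ℂ) = MvPowerSeries.monomial (R := ℂ) 0 (4:ℂ) from rfl,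
    X_def, monomial_mul_monomial, mul_one]
  congr 1
  simp [pt]

lemma two_X0_X1 : (2 : MvPowerSeries (Fin 2) ℂ) * MvPowerSeries.X 0 * MvPowerSeries.X 1
    = MvPowerSeries.monomial (R := ℂ) (pt 1 1) 2 := by
  have h2 : (2 : MvPowerSeries (Fin 2) ℂ) = MvPowerSeries.C (σ := Fin 2) (R := ℂ) 2 :=
    (map_ofNat (MvPowerSeries.C (σ := Fin 2) (R := ℂ)) 2).symm
  rw [h2, show MvPowerSeries.C (σ := Fin 2) (R := ℂ) (2:ℂ) = MvPowerSeries.monomial (R := ℂ) 0 (2:ℂ) from rfl,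
    X_def, X_def, monomial_mul_monomial, monomial_mul_monomial, mul_one, mul_one]
  congr 1
  simp [pt]

/-- coefficients of `1 - radicand`. -/
lemma coeff_one_sub_radicand (m n : ℕ) :
    MvPowerSeries.coeff (R := ℂ) (pt m n) (1 - radicand) =
      if m = 0 ∧ n = 1 then 4 else if m = 1 ∧ n = 1 then -2 else if m = 2 ∧ n = 2 then -1
        else 0 := by
  classical
  have : (1 : MvPowerSeries (Fin 2) ℂ) - radicand
      = MvPowerSeries.monomial (R := ℂ) (pt 0 1) 4 - MvPowerSeries.monomial (R := ℂ) (pt 1 1) 2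
        - MvPowerSeries.monomial (R := ℂ) (pt 2 2) 1 := by
    rw [radicand]
    rw [show (2 : MvPowerSeries (Fin 2) ℂ) * MvPowerSeries.X 0 * MvPowerSeries.X 1
      = MvPowerSeries.monomial (R := ℂ) (pt 1 1) 2 from two_X0_X1, ← four_X1, ← X0sq_mul_X1sq]
    ring
  rw [this, map_sub, map_sub, coeff_monomial, coeff_monomial, coeff_monomial]
  simp only [pt_inj_iff]
  split_ifs with h1 h2 h3 <;> first | omega | norm_num

lemma basel (k : ℕ) : ∑ a ∈ range k, (1:ℝ)/(((a:ℝ)+1)^2) ≤ 2 := by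
  have key : ∀ a : ℕ, (1:ℝ)/(((a:ℝ)+1)^2)
      ≤ 2/((a:ℝ)+1) - 2/(((a+1:ℕ):ℝ)+1) := by
    intro a
    push_cast
    have h1 : (0:ℝ) < (a:ℝ)+1 := by positivity
    have h2 : (0:ℝ) < (a:ℝ)+1+1 := by positivity
    rw [div_sub_div _ _ h1.ne' h2.ne', div_le_div_iff₀ (by positivity) (by positivity)]
    nlinarith
  calc ∑ a ∈ range k, (1:ℝ)/(((a:ℝ)+1)^2)
      ≤ ∑ a ∈ range k, (2/((a:ℝ)+1) - 2/(((a+1:ℕ):ℝ)+1)) :=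
        Finset.sum_le_sum fun a _ => key a
    _ = 2/(((0:ℕ):ℝ)+1) - 2/((k:ℝ)+1) :=
        Finset.sum_range_sub' (fun a : ℕ => 2/((a:ℝ)+1)) k
    _ ≤ 2 := by
        have : (0:ℝ) ≤ 2/((k:ℝ)+1) := by positivity
        norm_num
        linarith

lemma sum_inv_sq (m : ℕ) :
    ∑ a ∈ range (m+1), (1:ℝ)/(((a:ℝ)+1)^2 * (((m-a:ℕ):ℝ)+1)^2) ≤ 16/(((m:ℝ)+1)^2) := by
  have hterm : ∀ a ∈ range (m+1), (1:ℝ)/(((a:ℝ)+1)^2 * (((m-a:ℕ):ℝ)+1)^2)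
      ≤ (4/(((m:ℝ)+1)^2)) * ((1:ℝ)/(((a:ℝ)+1)^2) + (1:ℝ)/((((m-a:ℕ):ℝ)+1)^2)) := by
    intro a ha
    rw [Finset.mem_range] at ha
    have haa : ((m-a:ℕ):ℝ) = (m:ℝ) - (a:ℝ) := by
      have : a ≤ m := by omega
      push_cast [this]; ring
    have h1 : (0:ℝ) < (a:ℝ)+1 := by positivity
    have h2 : (0:ℝ) < ((m-a:ℕ):ℝ)+1 := by positivity
    have hm1 : (0:ℝ) < (m:ℝ)+1 := by positivity
    rcases le_total ((a:ℝ)+1) (((m-a:ℕ):ℝ)+1) with h | h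
    · have hge : ((m:ℝ)+1)/2 ≤ ((m-a:ℕ):ℝ)+1 := by rw [haa] at h ⊢; linarith
      have : (1:ℝ)/((((m-a:ℕ):ℝ)+1)^2) ≤ 4/(((m:ℝ)+1)^2) := by
        rw [div_le_div_iff₀ (by positivity) (by positivity)]
        nlinarith
      calc (1:ℝ)/(((a:ℝ)+1)^2 * (((m-a:ℕ):ℝ)+1)^2)
          = (1/((((m-a:ℕ):ℝ)+1)^2)) * (1/(((a:ℝ)+1)^2)) := by
            rw [div_mul_div_comm]; ring_nf
        _ ≤ (4/(((m:ℝ)+1)^2)) * (1/(((a:ℝ)+1)^2)) := by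
            apply mul_le_mul_of_nonneg_right this (by positivity)
        _ ≤ (4/(((m:ℝ)+1)^2)) * ((1:ℝ)/(((a:ℝ)+1)^2) + (1:ℝ)/((((m-a:ℕ):ℝ)+1)^2)) := by
            apply mul_le_mul_of_nonneg_left _ (by positivity)
            have : (0:ℝ) ≤ 1/((((m-a:ℕ):ℝ)+1)^2) := by positivity
            linarith
    · have hge : ((m:ℝ)+1)/2 ≤ (a:ℝ)+1 := by rw [haa] at h; linarith
      have : (1:ℝ)/(((a:ℝ)+1)^2) ≤ 4/(((m:ℝ)+1)^2) := by
        rw [div_le_div_iff₀ (by positivity) (by positivity)]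
        nlinarith
      calc (1:ℝ)/(((a:ℝ)+1)^2 * (((m-a:ℕ):ℝ)+1)^2)
          = (1/(((a:ℝ)+1)^2)) * (1/((((m-a:ℕ):ℝ)+1)^2)) := by
            rw [div_mul_div_comm]; ring_nf
        _ ≤ (4/(((m:ℝ)+1)^2)) * (1/((((m-a:ℕ):ℝ)+1)^2)) := by
            apply mul_le_mul_of_nonneg_right this (by positivity)
        _ ≤ (4/(((m:ℝ)+1)^2)) * ((1:ℝ)/(((a:ℝ)+1)^2) + (1:ℝ)/((((m-a:ℕ):ℝ)+1)^2)) := by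
            apply mul_le_mul_of_nonneg_left _ (by positivity)
            have : (0:ℝ) ≤ 1/(((a:ℝ)+1)^2) := by positivity
            linarith
  calc ∑ a ∈ range (m+1), (1:ℝ)/(((a:ℝ)+1)^2 * (((m-a:ℕ):ℝ)+1)^2)
      ≤ ∑ a ∈ range (m+1),
          (4/(((m:ℝ)+1)^2)) * ((1:ℝ)/(((a:ℝ)+1)^2) + (1:ℝ)/((((m-a:ℕ):ℝ)+1)^2)) :=
        Finset.sum_le_sum hterm
    _ = (4/(((m:ℝ)+1)^2)) *
        ((∑ a ∈ range (m+1), (1:ℝ)/(((a:ℝ)+1)^2))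
          + ∑ a ∈ range (m+1), (1:ℝ)/((((m-a:ℕ):ℝ)+1)^2)) := by
        rw [← Finset.mul_sum, Finset.sum_add_distrib]
    _ ≤ 16/(((m:ℝ)+1)^2) := by
        have h1 := basel (m+1)
        have h2 : ∑ a ∈ range (m+1), (1:ℝ)/((((m-a:ℕ):ℝ)+1)^2)
            = ∑ a ∈ range (m+1), (1:ℝ)/(((a:ℝ)+1)^2) := by
          conv_rhs => rw [← Finset.sum_range_reflect]
          apply Finset.sum_congr rfl
          intro a ha
          rw [Finset.mem_range] at ha
          have e : m + 1 - 1 - a = m - a := by omega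
          rw [e]
        rw [h2]
        have hm : (0:ℝ) < ((m:ℝ)+1)^2 := by positivity
        rw [div_mul_eq_mul_div, div_le_div_iff₀ hm hm]
        nlinarith
noncomputable def u (S : MvPowerSeries (Fin 2) ℂ) (m n : ℕ) : ℂ :=
  MvPowerSeries.coeff (R := ℂ) (pt m n) (1 - S)

variable (S : MvPowerSeries (Fin 2) ℂ)

lemma u_rec (hS_sq : S ^ 2 = radicand) (m n : ℕ) :
    u S m n + u S m n =
      (∑ a ∈ range (m+1), ∑ b ∈ range (n+1), u S a b * u S (m-a) (n-b))
        + MvPowerSeries.coeff (R := ℂ) (pt m n) (1 - radicand) := by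
  have key : (1 - S) * (1 - S) + (1 - radicand) = (1 - S) + (1 - S) := by
    rw [← hS_sq]; ring
  have h := congrArg (MvPowerSeries.coeff (R := ℂ) (pt m n)) key
  rw [map_add, map_add, coeff_mul_pt] at h
  exact h.symm

lemma u00 (hS_one : MvPowerSeries.constantCoeff (σ := Fin 2) (R := ℂ) S = 1) : u S 0 0 = 0 := by
  rw [u, pt_zero, map_sub]
  simp [hS_one]

lemma u_vanish (hS_sq : S ^ 2 = radicand)
    (hS_one : MvPowerSeries.constantCoeff (σ := Fin 2) (R := ℂ) S = 1) :
    ∀ m n : ℕ, n < m → u S m n = 0 := by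
  suffices H : ∀ N m n : ℕ, m + n ≤ N → n < m → u S m n = 0 by
    exact fun m n h => H (m+n) m n le_rfl h
  intro N
  induction N with
  | zero => intro m n h1 h2; omega
  | succ N ih =>
    intro m n h1 h2
    have hrec := u_rec S hS_sq m n
    have hq : MvPowerSeries.coeff (R := ℂ) (pt m n) (1 - radicand) = 0 := by
      rw [coeff_one_sub_radicand]
      split_ifs with c1 c2 c3 <;> first | rfl | omega
    have hsum : (∑ a ∈ range (m+1), ∑ b ∈ range (n+1), u S a b * u S (m-a) (n-b)) = 0 := by
      apply Finset.sum_eq_zero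
      intro a ha
      apply Finset.sum_eq_zero
      intro b hb
      rw [Finset.mem_range] at ha hb
      by_cases h00 : a = 0 ∧ b = 0
      · obtain ⟨rfl, rfl⟩ := h00
        rw [u00 S hS_one, zero_mul]
      by_cases hmn : a = m ∧ b = n
      · obtain ⟨rfl, rfl⟩ := hmn
        simp only [Nat.sub_self]
        rw [u00 S hS_one, mul_zero]
      by_cases hab : b < a
      · rw [ih a b (by omega) hab, zero_mul]
      · have hba : n - b < m - a := by omega
        rw [ih (m-a) (n-b) (by omega) hba, mul_zero]
    rw [hsum, hq, add_zero] at hrec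
    have := add_self_eq_zero.mp hrec
    exact this

lemma u_bound (hS_sq : S ^ 2 = radicand)
    (hS_one : MvPowerSeries.constantCoeff (σ := Fin 2) (R := ℂ) S = 1) :
    ∀ m n : ℕ, ‖u S m n‖ ≤ (1/256) * 8192^n / (((m:ℝ)+1)^2 * ((n:ℝ)+1)^2) := by
  suffices H : ∀ N m n : ℕ, m + n ≤ N →
      ‖u S m n‖ ≤ (1/256) * 8192^n / (((m:ℝ)+1)^2 * ((n:ℝ)+1)^2) by
    exact fun m n => H (m+n) m n le_rfl
  intro N
  induction N with
  | zero =>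
    intro m n h1
    have hm : m = 0 := by omega
    have hn : n = 0 := by omega
    subst hm; subst hn
    rw [u00 S hS_one]
    simp only [norm_zero]
    positivity
  | succ N ih =>
    intro m n h1
    by_cases h00 : m = 0 ∧ n = 0
    · obtain ⟨rfl, rfl⟩ := h00
      rw [u00 S hS_one]
      simp only [norm_zero]
      positivity
    have hrec := u_rec S hS_sq m n
    set B : ℝ := (1/256) * 8192^n / (((m:ℝ)+1)^2 * ((n:ℝ)+1)^2) with hB
    have hBpos : 0 < B := by rw [hB]; positivity
    -- bound on the double sum
    have hsum : ‖∑ a ∈ range (m+1), ∑ b ∈ range (n+1), u S a b * u S (m-a) (n-b)‖ ≤ B := by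
      have step1 : ‖∑ a ∈ range (m+1), ∑ b ∈ range (n+1), u S a b * u S (m-a) (n-b)‖
          ≤ ∑ a ∈ range (m+1), ∑ b ∈ range (n+1),
              ((1/65536) * (8192:ℝ)^n) *
                ((1/(((a:ℝ)+1)^2 * (((m-a:ℕ):ℝ)+1)^2)) *
                  (1/(((b:ℝ)+1)^2 * (((n-b:ℕ):ℝ)+1)^2))) := by
        refine (norm_sum_le _ _).trans (Finset.sum_le_sum fun a ha => ?_)
        refine (norm_sum_le _ _).trans (Finset.sum_le_sum fun b hb => ?_)
        rw [Finset.mem_range] at ha hb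
        by_cases hz : (a = 0 ∧ b = 0) ∨ (a = m ∧ b = n)
        · have : u S a b * u S (m-a) (n-b) = 0 := by
            rcases hz with ⟨rfl, rfl⟩ | ⟨rfl, rfl⟩
            · rw [u00 S hS_one, zero_mul]
            · simp only [Nat.sub_self]; rw [u00 S hS_one, mul_zero]
          rw [this, norm_zero]
          positivity
        · push_neg at hz
          have hz1 := hz.1
          have hz2 := hz.2
          have hb1 : ‖u S a b‖ ≤ (1/256) * 8192^b / (((a:ℝ)+1)^2 * ((b:ℝ)+1)^2) := by
            apply ih a b
            omega
          have hb2 : ‖u S (m-a) (n-b)‖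
              ≤ (1/256) * 8192^(n-b) / ((((m-a:ℕ):ℝ)+1)^2 * (((n-b:ℕ):ℝ)+1)^2) := by
            apply ih (m-a) (n-b)
            omega
          rw [norm_mul]
          calc ‖u S a b‖ * ‖u S (m-a) (n-b)‖
              ≤ ((1/256) * 8192^b / (((a:ℝ)+1)^2 * ((b:ℝ)+1)^2)) *
                ((1/256) * 8192^(n-b) / ((((m-a:ℕ):ℝ)+1)^2 * (((n-b:ℕ):ℝ)+1)^2)) :=
              mul_le_mul hb1 hb2 (norm_nonneg _) (by positivity)
            _ = ((1/65536) * (8192:ℝ)^n) *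
                ((1/(((a:ℝ)+1)^2 * (((m-a:ℕ):ℝ)+1)^2)) *
                  (1/(((b:ℝ)+1)^2 * (((n-b:ℕ):ℝ)+1)^2))) := by
              have hbn : (8192:ℝ)^b * (8192:ℝ)^(n-b) = 8192^n := by
                rw [← pow_add]
                congr 1
                omega
              have e1 : ((a:ℝ)+1) ≠ 0 := by positivity
              have e2 : ((b:ℝ)+1) ≠ 0 := by positivity
              have e3 : (((m-a:ℕ):ℝ)+1) ≠ 0 := by positivity
              have e4 : (((n-b:ℕ):ℝ)+1) ≠ 0 := by positivity
              rw [div_mul_div_comm, mul_mul_mul_comm, hbn]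
              norm_num
              field_simp
      refine step1.trans ?_
      have step2 : ∑ a ∈ range (m+1), ∑ b ∈ range (n+1),
            ((1/65536) * (8192:ℝ)^n) *
              ((1/(((a:ℝ)+1)^2 * (((m-a:ℕ):ℝ)+1)^2)) *
                (1/(((b:ℝ)+1)^2 * (((n-b:ℕ):ℝ)+1)^2)))
          = ((1/65536) * (8192:ℝ)^n) *
              ((∑ a ∈ range (m+1), 1/(((a:ℝ)+1)^2 * (((m-a:ℕ):ℝ)+1)^2)) *
               (∑ b ∈ range (n+1), 1/(((b:ℝ)+1)^2 * (((n-b:ℕ):ℝ)+1)^2))) := by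
        rw [Finset.sum_mul_sum, Finset.mul_sum]
        refine Finset.sum_congr rfl fun a _ => ?_
        rw [Finset.mul_sum]
      rw [step2]
      have s1 := sum_inv_sq m
      have s2 := sum_inv_sq n
      have p1 : (0:ℝ) ≤ ∑ a ∈ range (m+1), 1/(((a:ℝ)+1)^2 * (((m-a:ℕ):ℝ)+1)^2) := by
        apply Finset.sum_nonneg; intro a _; positivity
      have p2 : (0:ℝ) ≤ ∑ b ∈ range (n+1), 1/(((b:ℝ)+1)^2 * (((n-b:ℕ):ℝ)+1)^2) := by
        apply Finset.sum_nonneg; intro b _; positivity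
      calc ((1/65536) * (8192:ℝ)^n) *
              ((∑ a ∈ range (m+1), 1/(((a:ℝ)+1)^2 * (((m-a:ℕ):ℝ)+1)^2)) *
               (∑ b ∈ range (n+1), 1/(((b:ℝ)+1)^2 * (((n-b:ℕ):ℝ)+1)^2)))
          ≤ ((1/65536) * (8192:ℝ)^n) *
              ((16/(((m:ℝ)+1)^2)) * (16/(((n:ℝ)+1)^2))) := by
            apply mul_le_mul_of_nonneg_left _ (by positivity)
            apply mul_le_mul s1 s2 p2 (by positivity)
        _ = B := by
            rw [hB]
            have hm1 : ((m:ℝ)+1) ≠ 0 := by positivity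
            have hn1 : ((n:ℝ)+1) ≠ 0 := by positivity
            field_simp
            ring
    -- bound on the inhomogeneous term
    have hq : ‖MvPowerSeries.coeff (R := ℂ) (pt m n) (1 - radicand)‖ ≤ B := by
      rw [coeff_one_sub_radicand]
      split_ifs with c1 c2 c3
      · obtain ⟨rfl, rfl⟩ := c1
        rw [hB]
        simp only [Complex.norm_ofNat]
        push_cast
        norm_num
      · obtain ⟨rfl, rfl⟩ := c2
        rw [hB]
        rw [show ((-2 : ℂ)) = -(2:ℂ) by norm_num, norm_neg]
        simp only [Complex.norm_ofNat]
        push_cast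
        norm_num
      · obtain ⟨rfl, rfl⟩ := c3
        rw [hB]
        rw [show ((-1 : ℂ)) = -(1:ℂ) by norm_num, norm_neg, norm_one]
        push_cast
        norm_num
      · simp only [norm_zero]
        exact hBpos.le
    have h2norm : ‖u S m n + u S m n‖ = 2 * ‖u S m n‖ := by
      rw [← two_mul, norm_mul]
      simp [Complex.norm_ofNat]
    have hfinal : 2 * ‖u S m n‖ ≤ B + B := by
      rw [← h2norm, hrec]
      exact (norm_add_le _ _).trans (add_le_add hsum hq)
    linarith

variable (S : MvPowerSeries (Fin 2) ℂ)

lemma coeffS (m n : ℕ) : MvPowerSeries.coeff (R := ℂ) (pt m n) S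
    = (if m = 0 ∧ n = 0 then 1 else 0) - u S m n := by
  have h : u S m n = MvPowerSeries.coeff (R := ℂ) (pt m n) 1 - MvPowerSeries.coeff (R := ℂ) (pt m n) S := by
    rw [u, map_sub]
  rw [MvPowerSeries.coeff_one] at h
  by_cases h00 : m = 0 ∧ n = 0
  · have hp : pt m n = 0 := by obtain ⟨rfl, rfl⟩ := h00; exact pt_zero
    rw [if_pos hp] at h
    rw [if_pos h00]
    linear_combination h
  · have hp : pt m n ≠ 0 := by
      intro hp
      exact h00 (pt_inj_iff.mp (by rw [hp, pt_zero]))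
    rw [if_neg hp] at h
    rw [if_neg h00]
    linear_combination h

lemma coeffS_bound (hS_sq : S ^ 2 = radicand)
    (hS_one : MvPowerSeries.constantCoeff (σ := Fin 2) (R := ℂ) S = 1) (m n : ℕ) :
    ‖MvPowerSeries.coeff (R := ℂ) (pt m n) S‖ ≤ 8192^n := by
  rw [coeffS]
  by_cases h00 : m = 0 ∧ n = 0
  · obtain ⟨rfl, rfl⟩ := h00
    rw [if_pos ⟨rfl, rfl⟩, u00 S hS_one]
    simp
  · rw [if_neg h00, zero_sub, norm_neg]
    have hu := u_bound S hS_sq hS_one m n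
    have hw : (1:ℝ) ≤ ((m:ℝ)+1)^2 * ((n:ℝ)+1)^2 := by
      have hm : (0:ℝ) ≤ (m:ℝ) := Nat.cast_nonneg m
      have hn : (0:ℝ) ≤ (n:ℝ) := Nat.cast_nonneg n
      have h1 : (1:ℝ) ≤ ((m:ℝ)+1)^2 := by nlinarith
      have h2 : (1:ℝ) ≤ ((n:ℝ)+1)^2 := by nlinarith
      nlinarith
    have h8 : (0:ℝ) ≤ (8192:ℝ)^n := by positivity
    calc ‖u S m n‖ ≤ (1/256) * 8192^n / (((m:ℝ)+1)^2 * ((n:ℝ)+1)^2) := hu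
      _ ≤ (1/256) * 8192^n / 1 := by
          apply div_le_div_of_nonneg_left (by positivity) (by norm_num) hw
      _ ≤ 8192^n := by
          rw [div_one]
          nlinarith

lemma coeffS_vanish (hS_sq : S ^ 2 = radicand)
    (hS_one : MvPowerSeries.constantCoeff (σ := Fin 2) (R := ℂ) S = 1) (m n : ℕ) (h : n < m) :
    MvPowerSeries.coeff (R := ℂ) (pt m n) S = 0 := by
  rw [coeffS, if_neg (by omega), u_vanish S hS_sq hS_one m n h, zero_sub, neg_zero]

lemma coeff_G (k n : ℕ) : MvPowerSeries.coeff (R := ℂ) (pt k n)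
      (-1 - MvPowerSeries.X 0 * MvPowerSeries.X 1 + S)
    = -(if k = 0 ∧ n = 0 then 1 else 0) - (if k = 1 ∧ n = 1 then 1 else 0)
        + MvPowerSeries.coeff (R := ℂ) (pt k n) S := by
  rw [map_add, map_sub, map_neg, MvPowerSeries.coeff_one, X0_mul_X1, coeff_monomial]
  have hc : (pt k n = 0) = (k = 0 ∧ n = 0) := by
    rw [← pt_zero]; exact propext pt_inj_iff
  have hc2 : (pt k n = pt 1 1) = (k = 1 ∧ n = 1) := propext pt_inj_iff
  simp only [hc, hc2]

lemma Fcoeff_formula (m n : ℕ) : Fcoeff S m n =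
    if 1 ≤ m then (1/2 : ℂ) * MvPowerSeries.coeff (R := ℂ) (pt (m-1) n)
      (-1 - MvPowerSeries.X 0 * MvPowerSeries.X 1 + S) else 0 := by
  show MvPowerSeries.coeff (R := ℂ) (pt m n) (MvPowerSeries.C (σ := Fin 2) (R := ℂ) (1/2) * MvPowerSeries.X 0 *
      (-1 - MvPowerSeries.X 0 * MvPowerSeries.X 1 + S)) = _
  rw [mul_assoc, MvPowerSeries.coeff_C_mul, X_def, MvPowerSeries.coeff_monomial_mul]
  have hle : (Finsupp.single (0 : Fin 2) 1 ≤ pt m n) ↔ 1 ≤ m := by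
    rw [Finsupp.single_le_iff, pt_apply0]
  by_cases hm : 1 ≤ m
  · have hidx : pt m n - Finsupp.single (0:Fin 2) 1 = pt (m-1) n := by
      ext i
      fin_cases i <;>
        simp [pt, Finsupp.tsub_apply, Finsupp.single_apply]
    rw [if_pos (hle.mpr hm), if_pos hm, one_mul, hidx]
  · rw [if_neg (fun h => hm (hle.mp h)), if_neg hm, mul_zero]

lemma Fcoeff_bound (hS_sq : S ^ 2 = radicand)
    (hS_one : MvPowerSeries.constantCoeff (σ := Fin 2) (R := ℂ) S = 1) (m n : ℕ) :
    ‖Fcoeff S m n‖ ≤ 2 * 8192^n := by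
  have h8 : (1:ℝ) ≤ (8192:ℝ)^n := one_le_pow₀ (by norm_num)
  rw [Fcoeff_formula]
  split_ifs with hm
  · rw [norm_mul]
    have hhalf : ‖(1/2 : ℂ)‖ = 1/2 := by
      rw [norm_div, norm_one, Complex.norm_ofNat]
    rw [hhalf, coeff_G]
    have hite1 : ‖-(if m-1 = 0 ∧ n = 0 then (1:ℂ) else 0)‖ ≤ 1 := by
      rw [norm_neg]; split_ifs <;> simp
    have hite2 : ‖(if m-1 = 1 ∧ n = 1 then (1:ℂ) else 0)‖ ≤ 1 := by
      split_ifs <;> simp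
    have hS := coeffS_bound S hS_sq hS_one (m-1) n
    have tri : ‖-(if m-1 = 0 ∧ n = 0 then (1:ℂ) else 0) - (if m-1 = 1 ∧ n = 1 then (1:ℂ) else 0)
        + MvPowerSeries.coeff (R := ℂ) (pt (m-1) n) S‖ ≤ 1 + 1 + 8192^n := by
      refine (norm_add_le _ _).trans ?_
      refine add_le_add ((norm_sub_le _ _).trans (add_le_add hite1 hite2)) hS
    nlinarith [tri]
  · simp only [norm_zero]
    positivity

lemma Fcoeff_vanish (hS_sq : S ^ 2 = radicand)
    (hS_one : MvPowerSeries.constantCoeff (σ := Fin 2) (R := ℂ) S = 1) (m n : ℕ) (h : n + 1 < m) :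
    Fcoeff S m n = 0 := by
  rw [Fcoeff_formula]
  split_ifs with hm
  · rw [coeff_G, coeffS_vanish S hS_sq hS_one (m-1) n (by omega),
      if_neg (by omega), if_neg (by omega)]
    simp
  · rfl

noncomputable def mk2series (a : ℕ → ℕ → ℂ) : FormalMultilinearSeries ℂ (ℂ × ℂ) ℂ :=
  fun k => ∑ n ∈ Finset.range (k+1), (a (k-n) n / (Nat.factorial n : ℂ)) •
    (ContinuousMultilinearMap.mkPiAlgebra ℂ (Fin k) ℂ).compContinuousLinearMap
      (fun i => if (i : ℕ) < k - n then ContinuousLinearMap.fst ℂ ℂ ℂ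
        else ContinuousLinearMap.snd ℂ ℂ ℂ)

lemma prod_ite_pow (k j : ℕ) (hj : j ≤ k) (y z : ℂ) :
    (∏ i : Fin k, (if (i : ℕ) < j then y else z)) = y ^ j * z ^ (k - j) := by
  rw [Fin.prod_univ_eq_prod_range (fun i => if i < j then y else z) k]
  rw [Finset.prod_ite]
  have h1 : (Finset.range k).filter (fun i => i < j) = Finset.range j := by
    ext i
    simp only [Finset.mem_filter, Finset.mem_range]
    omega
  have h2 : ((Finset.range k).filter (fun i => ¬ i < j)).card = k - j := by
    have := Finset.card_filter_add_card_filter_not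
      (s := Finset.range k) (p := fun i => i < j)
    rw [h1] at this
    simp only [Finset.card_range] at this
    omega
  rw [Finset.prod_const, Finset.prod_const, h1, Finset.card_range, h2]

lemma mk2series_apply (a : ℕ → ℕ → ℂ) (k : ℕ) (v : ℂ × ℂ) :
    (mk2series a k) (fun _ => v) =
      ∑ n ∈ Finset.range (k+1), a (k-n) n * v.1 ^ (k-n) * v.2 ^ n / (Nat.factorial n : ℂ) := by
  rw [mk2series, ContinuousMultilinearMap.sum_apply]
  refine Finset.sum_congr rfl fun n hn => ?_
  rw [Finset.mem_range] at hn
  rw [ContinuousMultilinearMap.smul_apply, ContinuousMultilinearMap.compContinuousLinearMap_apply,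
    ContinuousMultilinearMap.mkPiAlgebra_apply]
  have : (∏ i : Fin k, (if (i : ℕ) < k - n then ContinuousLinearMap.fst ℂ ℂ ℂ
      else ContinuousLinearMap.snd ℂ ℂ ℂ) v) = v.1 ^ (k-n) * v.2 ^ (k - (k-n)) := by
    rw [← prod_ite_pow k (k-n) (by omega) v.1 v.2]
    refine Finset.prod_congr rfl fun i _ => ?_
    split_ifs <;> rfl
  have hkn : k - (k - n) = n := by omega
  rw [hkn] at this
  rw [this]
  simp only [smul_eq_mul]
  ring

lemma mk2series_norm_le (a : ℕ → ℕ → ℂ) (k : ℕ) :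
    ‖mk2series a k‖ ≤ ∑ n ∈ Finset.range (k+1), ‖a (k-n) n‖ / (Nat.factorial n : ℝ) := by
  refine (norm_sum_le _ _).trans (Finset.sum_le_sum fun n hn => ?_)
  refine (ContinuousMultilinearMap.opNorm_smul_le _ _).trans ?_
  have h1 : ‖a (k-n) n / (Nat.factorial n : ℂ)‖ = ‖a (k-n) n‖ / (Nat.factorial n : ℝ) := by
    rw [norm_div]
    congr 1
    rw [Complex.norm_natCast]
  have h2 : ‖(ContinuousMultilinearMap.mkPiAlgebra ℂ (Fin k) ℂ).compContinuousLinearMap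
      (fun i => if (i : ℕ) < k - n then ContinuousLinearMap.fst ℂ ℂ ℂ
        else ContinuousLinearMap.snd ℂ ℂ ℂ)‖ ≤ 1 := by
    refine (ContinuousMultilinearMap.norm_compContinuousLinearMap_le _ _).trans ?_
    rw [ContinuousMultilinearMap.norm_mkPiAlgebra, one_mul]
    refine Finset.prod_le_one (fun i _ => norm_nonneg _) (fun i _ => ?_)
    split_ifs
    · exact ContinuousLinearMap.norm_fst_le ℂ ℂ ℂ
    · exact ContinuousLinearMap.norm_snd_le ℂ ℂ ℂ
  calc ‖a (k-n) n / (Nat.factorial n : ℂ)‖ *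
        ‖(ContinuousMultilinearMap.mkPiAlgebra ℂ (Fin k) ℂ).compContinuousLinearMap
          (fun i => if (i : ℕ) < k - n then ContinuousLinearMap.fst ℂ ℂ ℂ
            else ContinuousLinearMap.snd ℂ ℂ ℂ)‖
      ≤ ‖a (k-n) n / (Nat.factorial n : ℂ)‖ * 1 :=
        mul_le_mul_of_nonneg_left h2 (by positivity)
    _ = ‖a (k-n) n‖ / (Nat.factorial n : ℝ) := by rw [mul_one, h1]

lemma pow_div_factorial_le_exp (t : ℝ) (ht : 0 ≤ t) (j : ℕ) :
    t ^ j / (Nat.factorial j : ℝ) ≤ Real.exp t := by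
  refine le_trans ?_ (Real.sum_le_exp_of_nonneg ht (j+1))
  refine Finset.single_le_sum (f := fun i => t ^ i / (Nat.factorial i : ℝ)) ?_ ?_
  · intro i _; positivity
  · exact Finset.self_mem_range_succ j

lemma summable_aux (c x : ℝ) (hc : 0 ≤ c) (hx : 0 ≤ x) :
    Summable (fun n : ℕ => c * (((n:ℝ)+2) * x ^ n / (Nat.factorial n : ℝ))) := by
  have hs : Summable (fun n : ℕ => c * (2 * ((2*x) ^ n / (Nat.factorial n : ℝ)))) :=
    (((Real.summable_pow_div_factorial (2*x)).mul_left 2).mul_left c)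
  refine Summable.of_nonneg_of_le (fun n => by positivity) (fun n => ?_) hs
  have h1 : ((n:ℝ)+2) ≤ 2^(n+1) := by
    have hN : n + 2 ≤ 2^(n+1) := Nat.succ_le_of_lt (Nat.lt_two_pow_self (n := n+1))
    exact_mod_cast hN
  have hfac : (0:ℝ) < (Nat.factorial n : ℝ) := by
    exact_mod_cast Nat.factorial_pos n
  refine mul_le_mul_of_nonneg_left ?_ hc
  rw [mul_pow, ← mul_div_assoc 2, ← mul_assoc]
  apply div_le_div_of_nonneg_right ?_ hfac.le
  calc ((n:ℝ)+2) * x^n ≤ 2^(n+1) * x^n :=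
        mul_le_mul_of_nonneg_right h1 (by positivity)
    _ = 2 * 2^n * x^n := by ring

/-- main part B lemma -/
lemma entire (a : ℕ → ℕ → ℂ) (C R : ℝ) (hC : 0 ≤ C) (hR : 1 ≤ R)
    (hb : ∀ m n : ℕ, ‖a m n‖ ≤ C * R ^ n) (hz : ∀ m n : ℕ, n + 1 < m → a m n = 0) :
    ∃ Fhat : ℂ × ℂ → ℂ, Differentiable ℂ Fhat ∧
      ∀ y z : ℂ, HasSum
        (fun p : ℕ × ℕ => a p.1 p.2 * y ^ p.1 * z ^ p.2 / (Nat.factorial p.2))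
        (Fhat (y, z)) := by
  -- the summand
  set f : ℂ × ℂ → ℕ × ℕ → ℂ :=
    fun v q => a q.1 q.2 * v.1 ^ q.1 * v.2 ^ q.2 / (Nat.factorial q.2) with hf
  -- summability at every point
  have hsummable : ∀ v : ℂ × ℂ, Summable (f v) := by
    intro v
    set M : ℝ := max 1 ‖v.1‖ with hM
    have hM1 : 1 ≤ M := le_max_left _ _
    have hM0 : 0 ≤ M := le_trans zero_le_one hM1
    set x : ℝ := R * M * ‖v.2‖ with hx
    have hx0 : 0 ≤ x := by positivity
    set g : ℕ × ℕ → ℝ :=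
      fun q => if q.1 ≤ q.2 + 1 then C * M * (x ^ q.2 / (Nat.factorial q.2 : ℝ)) else 0 with hg
    have hg0 : ∀ q, 0 ≤ g q := by
      intro q
      rw [hg]
      dsimp only
      split_ifs
      · positivity
      · exact le_refl 0
    -- summability of g
    have hgsum : Summable g := by
      have hswap : Summable (g ∘ (Equiv.prodComm ℕ ℕ)) → Summable g :=
        fun h => (Equiv.prodComm ℕ ℕ).summable_iff.mp h
      apply hswap
      have hnonneg : 0 ≤ (g ∘ (Equiv.prodComm ℕ ℕ)) := fun q => hg0 _
      rw [summable_prod_of_nonneg hnonneg]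
      constructor
      · intro n
        apply summable_of_ne_finset_zero (s := Finset.range (n + 2))
        intro m hm
        rw [Finset.mem_range] at hm
        show g (m, n) = 0
        rw [hg]
        dsimp only
        rw [if_neg (by omega)]
      · apply Summable.of_nonneg_of_le (fun n => ?_) (fun n => ?_)
          (summable_aux (C * M) x (by positivity) hx0)
        · apply tsum_nonneg
          intro m
          exact hg0 _
        · have htsum : ∑' m : ℕ, (g ∘ (Equiv.prodComm ℕ ℕ)) (n, m)
              = ∑ m ∈ Finset.range (n + 2), g (m, n) := by
            apply tsum_eq_sum
            intro m hm
            rw [Finset.mem_range] at hm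
            show g (m, n) = 0
            rw [hg]
            dsimp only
            rw [if_neg (by omega)]
          rw [htsum]
          have hterm : ∀ m ∈ Finset.range (n+2), g (m, n)
              = C * M * (x ^ n / (Nat.factorial n : ℝ)) := by
            intro m hm
            rw [Finset.mem_range] at hm
            rw [hg]
            dsimp only
            rw [if_pos (by omega)]
          rw [Finset.sum_congr rfl hterm, Finset.sum_const, Finset.card_range]
          rw [nsmul_eq_mul]
          push_cast
          ring_nf
          exact le_refl _
    -- comparison
    refine Summable.of_norm_bounded hgsum ?_
    intro q
    rw [hf, hg]
    dsimp only
    by_cases hq : q.1 ≤ q.2 + 1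
    · rw [if_pos hq]
      rw [norm_div, norm_mul, norm_mul]
      have h1 : ‖a q.1 q.2‖ ≤ C * R ^ q.2 := hb q.1 q.2
      have h2 : ‖v.1 ^ q.1‖ ≤ M ^ (q.2 + 1) := by
        rw [norm_pow]
        calc ‖v.1‖ ^ q.1 ≤ M ^ q.1 := pow_le_pow_left₀ (norm_nonneg _) (le_max_right _ _) _
          _ ≤ M ^ (q.2+1) := pow_le_pow_right₀ hM1 hq
      have h3 : ‖v.2 ^ q.2‖ = ‖v.2‖ ^ q.2 := norm_pow _ _
      have h4 : ‖((Nat.factorial q.2 : ℂ))‖ = (Nat.factorial q.2 : ℝ) := by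
        rw [Complex.norm_natCast]
      rw [h3, h4]
      have hfac : (0:ℝ) < (Nat.factorial q.2 : ℝ) := by exact_mod_cast Nat.factorial_pos q.2
      rw [div_le_iff₀ hfac]
      calc ‖a q.1 q.2‖ * ‖v.1 ^ q.1‖ * ‖v.2‖ ^ q.2
          ≤ (C * R ^ q.2) * (M ^ (q.2+1)) * ‖v.2‖ ^ q.2 := by
            apply mul_le_mul_of_nonneg_right _ (by positivity)
            exact mul_le_mul h1 h2 (norm_nonneg _) (by positivity)
        _ = C * M * x ^ q.2 := by
            rw [hx]
            rw [mul_pow, mul_pow]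
            ring
        _ = C * M * (x ^ q.2 / (Nat.factorial q.2 : ℝ)) * (Nat.factorial q.2 : ℝ) := by
            field_simp
    · rw [if_neg hq]
      rw [hz q.1 q.2 (by omega)]
      simp
  -- the entire function
  set Fhat : ℂ × ℂ → ℂ := fun v => ∑' q : ℕ × ℕ, f v q with hFhat
  have hball : HasFPowerSeriesOnBall Fhat (mk2series a) 0 ⊤ := by
    constructor
    · -- radius is infinite
      refine ENNReal.le_of_forall_nnreal_lt (fun r _ => ?_)
      set x : ℝ := 2 * R * (r : ℝ) with hxr
      have hx0 : (0:ℝ) ≤ x := by positivity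
      apply FormalMultilinearSeries.le_radius_of_bound _ (C * (x + 1) * Real.exp (x^2))
      intro k
      set j : ℕ := k / 2 with hj
      have hjfac : (0:ℝ) < (Nat.factorial j : ℝ) := by exact_mod_cast Nat.factorial_pos j
      -- bound on ‖p k‖
      have hnormk : ‖mk2series a k‖ ≤ ((k:ℝ)+1) * (C * R^k / (Nat.factorial j : ℝ)) := by
        refine (mk2series_norm_le a k).trans ?_
        have hcard : ∀ n ∈ Finset.range (k+1),
            ‖a (k-n) n‖ / (Nat.factorial n : ℝ) ≤ C * R^k / (Nat.factorial j : ℝ) := by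
          intro n hn
          rw [Finset.mem_range] at hn
          by_cases hbig : n + 1 < k - n
          · rw [hz (k-n) n hbig]
            simp only [norm_zero, zero_div]
            positivity
          · have hnj : j ≤ n := by omega
            have hfle : (Nat.factorial j : ℝ) ≤ (Nat.factorial n : ℝ) := by
              exact_mod_cast Nat.factorial_le hnj
            have hRn : R ^ n ≤ R ^ k := pow_le_pow_right₀ hR (by omega)
            have hnum : ‖a (k-n) n‖ ≤ C * R^k :=
              (hb (k-n) n).trans (mul_le_mul_of_nonneg_left hRn hC)
            exact div_le_div₀ (by positivity) hnum hjfac hfle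
        calc ∑ n ∈ Finset.range (k+1), ‖a (k-n) n‖ / (Nat.factorial n : ℝ)
            ≤ ∑ n ∈ Finset.range (k+1), C * R^k / (Nat.factorial j : ℝ) :=
              Finset.sum_le_sum hcard
          _ = ((k:ℝ)+1) * (C * R^k / (Nat.factorial j : ℝ)) := by
              rw [Finset.sum_const, Finset.card_range, nsmul_eq_mul]
              push_cast
              ring
      have hk1 : ((k:ℝ)+1) ≤ 2^k := by
        have := Nat.lt_two_pow_self (n := k)
        exact_mod_cast Nat.succ_le_of_lt this
      have hr0 : (0:ℝ) ≤ (r:ℝ) := r.coe_nonneg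
      have hxk : (2:ℝ)^k * R^k * (r:ℝ)^k = x^k := by
        rw [hxr, mul_pow, mul_pow]
      have hxsplit : x^k ≤ (x^2)^j * (x+1) := by
        have hk2 : k = 2*j + k % 2 := by omega
        rw [hk2, pow_add, pow_mul]
        rcases Nat.mod_two_eq_zero_or_one k with h | h <;> rw [h]
        · rw [pow_zero]
          nlinarith [pow_nonneg (sq_nonneg x) j]
        · rw [pow_one]
          nlinarith [pow_nonneg (sq_nonneg x) j]
      have hexp : (x^2)^j / (Nat.factorial j : ℝ) ≤ Real.exp (x^2) :=
        pow_div_factorial_le_exp (x^2) (sq_nonneg x) j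
      calc ‖mk2series a k‖ * (r:ℝ)^k
          ≤ (((k:ℝ)+1) * (C * R^k / (Nat.factorial j : ℝ))) * (r:ℝ)^k := by
            exact mul_le_mul_of_nonneg_right hnormk (by positivity)
        _ ≤ ((2:ℝ)^k * (C * R^k / (Nat.factorial j : ℝ))) * (r:ℝ)^k := by
            apply mul_le_mul_of_nonneg_right _ (by positivity)
            exact mul_le_mul_of_nonneg_right hk1 (by positivity)
        _ = C * (x^k / (Nat.factorial j : ℝ)) := by
            rw [← hxk]; field_simp
        _ ≤ C * (((x^2)^j * (x+1)) / (Nat.factorial j : ℝ)) := by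
            apply mul_le_mul_of_nonneg_left _ hC
            exact div_le_div_of_nonneg_right hxsplit hjfac.le
        _ = C * (x+1) * ((x^2)^j / (Nat.factorial j : ℝ)) := by
            field_simp
        _ ≤ C * (x + 1) * Real.exp (x^2) := by
            apply mul_le_mul_of_nonneg_left hexp (by positivity)
    · exact ENNReal.zero_lt_top
    · intro v _
      rw [zero_add]
      have hs : HasSum (f v) (Fhat v) := (hsummable v).hasSum
      have hsig : HasSum (f v ∘ (Finset.HasAntidiagonal.sigmaAntidiagonalEquivProd (A := ℕ))) (Fhat v) :=
        (Equiv.hasSum_iff _).mpr hs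
      have hfib : ∀ k : ℕ, HasSum (fun i : (Finset.HasAntidiagonal.antidiagonal k : Finset (ℕ × ℕ)) =>
          (f v ∘ (Finset.HasAntidiagonal.sigmaAntidiagonalEquivProd (A := ℕ))) ⟨k, i⟩)
          (∑ p ∈ Finset.HasAntidiagonal.antidiagonal k, f v p) := by
        intro k
        have h1 := hasSum_fintype (fun i : (Finset.HasAntidiagonal.antidiagonal k : Finset (ℕ × ℕ)) => f v (i : ℕ × ℕ))
        rwa [Finset.sum_coe_sort (Finset.HasAntidiagonal.antidiagonal k) (f v)] at h1
      have hreg := hsig.sigma hfib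
      have hk : ∀ k : ℕ, (mk2series a k) (fun _ => v) = ∑ p ∈ Finset.HasAntidiagonal.antidiagonal k, f v p := by
        intro k
        rw [Finset.Nat.sum_antidiagonal_eq_sum_range_succ (f := fun i j => f v (i, j))]
        rw [mk2series_apply]
        rw [← Finset.sum_range_reflect]
        refine Finset.sum_congr rfl fun i hi => ?_
        rw [Finset.mem_range] at hi
        have e1 : k + 1 - 1 - i = k - i := by omega
        have e2 : k - (k - i) = i := by omega
        rw [e1, e2, hf]
      have hfun : (fun k : ℕ => (mk2series a k) (fun _ => v))
          = fun k => ∑ p ∈ Finset.HasAntidiagonal.antidiagonal k, f v p := funext hk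
      rw [hfun]
      exact hreg
  refine ⟨Fhat, ?_, ?_⟩
  · intro v
    have hmem : v ∈ EMetric.ball (0 : ℂ × ℂ) ⊤ := by
      exact EMetric.mem_ball.mpr (edist_lt_top _ _)
    exact (hball.analyticAt_of_mem hmem).differentiableAt
  · intro y z
    exact (hsummable (y, z)).hasSum


end Stmt16Aux

/-- The coefficients `F_{m,n}` are bounded by an exponential function of `n`, and
consequently `F̂(y,z) = ∑ F_{m,n} yᵐ zⁿ / n!` converges everywhere and defines an
entire function on `ℂ²`. -/
theorem stmt16 -- `S` is the branch of `√(1 - 4z + 2yz + y²z²)` which evaluates to `1` at `(0,0)`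
    (S : MvPowerSeries (Fin 2) ℂ) (hS_sq : S ^ 2 = radicand)
    (hS_one : MvPowerSeries.constantCoeff (σ := Fin 2) (R := ℂ) S = 1) :
    (∃ C R : ℝ, 0 < C ∧ 0 < R ∧ ∀ m n : ℕ, ‖Fcoeff S m n‖ ≤ C * R ^ n) ∧
    ∃ Fhat : ℂ × ℂ → ℂ, Differentiable ℂ Fhat ∧
      ∀ y z : ℂ, HasSum
        (fun p : ℕ × ℕ => Fcoeff S p.1 p.2 * y ^ p.1 * z ^ p.2 / (Nat.factorial p.2))
        (Fhat (y, z)) := by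
  refine ⟨⟨2, 8192, by norm_num, by norm_num,
    fun m n => Stmt16Aux.Fcoeff_bound S hS_sq hS_one m n⟩, ?_⟩
  exact Stmt16Aux.entire (Fcoeff S) 2 8192 (by norm_num) (by norm_num)
    (fun m n => Stmt16Aux.Fcoeff_bound S hS_sq hS_one m n)
    (fun m n h => Stmt16Aux.Fcoeff_vanish S hS_sq hS_one m n h)
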